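/- If the test statistic T is injective on the permutation orbit of x (i.e., T(t,d,a_σ₁) = T(t,d,a_σ₂) implies a_{σ₁} = a_{σ₂}), then for every x, the number of indices j with T^(j)(x) = T^(k_α)(x) equals n!/C(n, Σᵢ aᵢ), and the number with T^(j)(x) ≥ T^(k_α)(x) is at least α·n!. -/

import Mathlib

open MeasureTheory Finset

noncomputable section

/-- Sample space of late-stage trial data `x = (t, d, a)`. -/
abbrev SampleSpace (n : ℕ) := ((Fin n → ℝ) × (Fin n → Bool)) × (Fin n → Bool)

/-- Permute the treatment-arm labels `a` of a data point `x = ((t,d),a)`. -/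
def permute {n : ℕ} (σ : Equiv.Perm (Fin n)) (x : SampleSpace n) : SampleSpace n :=
  (x.1, x.2 ∘ σ)

/-- Sorted values `T⁽¹⁾(x) ≤ ⋯ ≤ T^(n!)(x)` of the statistic over all permutations. -/
def sortedVals {n : ℕ} (T : SampleSpace n → ℝ) (x : SampleSpace n) : List ℝ :=
  ((Finset.univ : Finset (Equiv.Perm (Fin n))).val.map (fun σ => T (permute σ x))).sort (· ≤ ·)

/-- Critical value `T^(k_α)(x)` with `k_α = n! − ⌊α n!⌋`. -/
def Tcrit {n : ℕ} (α : ℝ) (T : SampleSpace n → ℝ) (x : SampleSpace n) : ℝ :=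
  (sortedVals T x).getD (Nat.factorial n - Nat.floor (α * (Nat.factorial n : ℝ)) - 1) 0

/-- `M⁺(x)`: number of permuted values strictly above the critical value. -/
def Mplus {n : ℕ} (α : ℝ) (T : SampleSpace n → ℝ) (x : SampleSpace n) : ℕ :=
  (Finset.univ.filter (fun σ : Equiv.Perm (Fin n) => T (permute σ x) > Tcrit α T x)).card

/-- `M⁰(x)`: number of permuted values equal to the critical value. -/
def Mzero {n : ℕ} (α : ℝ) (T : SampleSpace n → ℝ) (x : SampleSpace n) : ℕ :=
  (Finset.univ.filter (fun σ : Equiv.Perm (Fin n) => T (permute σ x) = Tcrit α T x)).card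

/-- The randomized α-level permutation test based on the statistic `T`. -/
def permTest {n : ℕ} (α : ℝ) (T : SampleSpace n → ℝ) (x : SampleSpace n) : ℝ :=
  if T x > Tcrit α T x then 1
  else if T x < Tcrit α T x then 0
  else (α * (Nat.factorial n : ℝ) - (Mplus α T x : ℝ)) / (Mzero α T x : ℝ)

/-!
Under injectivity the value `T (permute σ x)` determines the relabelling `x.2 ∘ σ`, so the
permutations attaining the critical value form a fibre of `σ ↦ x.2 ∘ σ`: a coset of the
stabiliser of the labelling, which has `k! (n - k)! = n! / C(n, k)` elements for `k = Σ aᵢ`.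
For the second count, the critical value is the entry of index `n! - ⌊α n!⌋ - 1` of the sorted
list of all `n!` values, so the `⌊α n!⌋ + 1 > α n!` entries from there on are at least as large.
-/

open Nat

theorem List.length_sub_le_countP_getElem_le {α : Type*} [Preorder α] [DecidableLE α] {L : List α}
    (hL : L.Pairwise (· ≤ ·)) {i : ℕ} (hi : i < L.length) :
    L.length - i ≤ L.countP (fun y => decide (L[i] ≤ y)) := by
  have hdrop : ∀ y ∈ L.drop i, L[i] ≤ y := by
    intro y hy
    obtain ⟨j, hj, rfl⟩ := List.mem_iff_getElem.mp hy
    rw [List.getElem_drop]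
    exact hL.rel_get_of_le (a := ⟨i, hi⟩) (b := ⟨i + j, by grind⟩) (by simp)
  calc L.length - i = (L.drop i).countP (fun y => decide (L[i] ≤ y)) := by
        rw [List.countP_eq_length.mpr (by simpa using hdrop), List.length_drop]
    _ ≤ L.countP (fun y => decide (L[i] ≤ y)) := (List.drop_sublist i L).countP_le

theorem Multiset.card_sub_le_countP_sort_getElem_le {α : Type*} [LinearOrder α]
    (s : Multiset α) {i : ℕ} (hi : i < (s.sort).length) :
    card s - i ≤ s.countP ((s.sort)[i] ≤ ·) := by
  have hcount := congrArg (countP ((s.sort)[i] ≤ ·)) (s.sort_eq (· ≤ ·))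
  rw [coe_countP] at hcount
  simpa [hcount, length_sort] using List.length_sub_le_countP_getElem_le (s.pairwise_sort _) hi

section PermCounting

variable {ι : Type*} [Fintype ι] [DecidableEq ι]

theorem card_perm_comp_eq_self (c : ι → Bool) :
    Fintype.card {g : Equiv.Perm ι // c ∘ g = c}
      = (#{i | c i = true})! * (Fintype.card ι - #{i | c i = true})! := by
  rw [DomMulAct.stabilizer_card, Fintype.prod_bool, Fintype.card_subtype, Fintype.card_subtype,
    ← Finset.card_compl, Finset.compl_filter]
  simp only [Bool.not_eq_true]

theorem card_perm_comp_eq_comp (c : ι → Bool) (σ₀ : Equiv.Perm ι) :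
    #{σ : Equiv.Perm ι | c ∘ σ = c ∘ σ₀}
      = (Fintype.card ι)! / (Fintype.card ι).choose #{i | c i = true} := by
  have hk : #{i | c i = true} ≤ Fintype.card ι := card_le_univ _
  rw [← Nat.choose_mul_factorial_mul_factorial hk, mul_assoc,
    Nat.mul_div_cancel_left _ (Nat.choose_pos hk), ← card_perm_comp_eq_self, ← Fintype.card_subtype]
  refine Fintype.card_congr ((Equiv.mulRight σ₀⁻¹).subtypeEquiv fun σ => ?_)
  rw [Equiv.coe_mulRight, Equiv.Perm.coe_mul, Equiv.Perm.coe_inv, ← Function.comp_assoc,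
    Equiv.comp_symm_eq]

end PermCounting

section PermutationTest

variable {n : ℕ} (α : ℝ) (T : SampleSpace n → ℝ) (x : SampleSpace n)

theorem length_sortedVals : (sortedVals T x).length = n ! := by
  simp [sortedVals, Multiset.length_sort, Fintype.card_perm]

theorem Tcrit_index_lt_length : (n !) - ⌊α * n !⌋₊ - 1 < (sortedVals T x).length := by
  have := factorial_pos n
  rw [length_sortedVals]
  omega

theorem Tcrit_eq_getElem :
    Tcrit α T x = (sortedVals T x)[(n !) - ⌊α * n !⌋₊ - 1]'(Tcrit_index_lt_length α T x) :=
  List.getD_eq_getElem ..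

theorem exists_permute_eq_Tcrit : ∃ σ, T (permute σ x) = Tcrit α T x := by
  have hmem := List.getElem_mem (Tcrit_index_lt_length α T x)
  rw [← Tcrit_eq_getElem, sortedVals, Multiset.mem_sort] at hmem
  simpa using hmem

theorem factorial_sub_le_card_Tcrit_le :
    (n !) - ((n !) - ⌊α * n !⌋₊ - 1) ≤ #{σ | Tcrit α T x ≤ T (permute σ x)} := by
  have h : Multiset.card (univ.val.map fun σ : Equiv.Perm (Fin n) => T (permute σ x))
      - ((n !) - ⌊α * n !⌋₊ - 1)
      ≤ (univ.val.map fun σ : Equiv.Perm (Fin n) => T (permute σ x)).countP (Tcrit α T x ≤ ·) := by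
    rw [Tcrit_eq_getElem]
    exact Multiset.card_sub_le_countP_sort_getElem_le _ _
  rwa [Multiset.card_map, card_val, Finset.card_univ, Fintype.card_perm, Fintype.card_fin,
    Multiset.countP_map] at h

theorem mul_factorial_le_card_Tcrit_le (hα : α < 1) :
    α * n ! ≤ #{σ | Tcrit α T x ≤ T (permute σ x)} := by
  have hfloor : ⌊α * n !⌋₊ < n ! := by
    rw [Nat.floor_lt' (factorial_ne_zero n)]
    nlinarith [(cast_pos (α := ℝ)).mpr (factorial_pos n)]
  have hcount := factorial_sub_le_card_Tcrit_le α T x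
  rw [show (n !) - ((n !) - ⌊α * n !⌋₊ - 1) = ⌊α * n !⌋₊ + 1 by omega] at hcount
  calc α * n ! ≤ ⌊α * n !⌋₊ + 1 := (lt_floor_add_one _).le
    _ ≤ #{σ | Tcrit α T x ≤ T (permute σ x)} := by exact_mod_cast hcount

theorem card_permute_eq_Tcrit
    (hinj : ∀ σ₁ σ₂ : Equiv.Perm (Fin n),
      T (permute σ₁ x) = T (permute σ₂ x) → x.2 ∘ σ₁ = x.2 ∘ σ₂) :
    #{σ | T (permute σ x) = Tcrit α T x} = n ! / n.choose #{i | x.2 i = true} := by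
  obtain ⟨σ₀, hσ₀⟩ := exists_permute_eq_Tcrit α T x
  have hfiber : univ.filter (fun σ => T (permute σ x) = Tcrit α T x)
      = univ.filter (fun σ : Equiv.Perm (Fin n) => x.2 ∘ σ = x.2 ∘ σ₀) := by
    refine filter_congr fun σ _ => ?_
    rw [← hσ₀]
    exact ⟨hinj σ σ₀, fun h => by rw [permute, permute, h]⟩
  rw [hfiber, card_perm_comp_eq_comp, Fintype.card_fin]

end PermutationTest

/-- If the statistic `T` is injective on the permutation orbit of `x`, then the number of
permutations attaining the critical value `T^(k_α)(x)` equals `n!/C(n, Σᵢ aᵢ)`, and the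
number of permuted values at least the critical value is at least `α·n!`. -/
theorem injective_statistic_counts
    {n : ℕ} (α : ℝ) (hα : α ∈ Set.Ioo (0:ℝ) 1)
    (T : SampleSpace n → ℝ) (x : SampleSpace n)
    (hinj : ∀ σ₁ σ₂ : Equiv.Perm (Fin n),
      T (permute σ₁ x) = T (permute σ₂ x) → x.2 ∘ σ₁ = x.2 ∘ σ₂) :
    (Finset.univ.filter fun σ : Equiv.Perm (Fin n) => T (permute σ x) = Tcrit α T x).card
        = Nat.factorial n / n.choose (Finset.univ.filter fun i => x.2 i = true).card
      ∧ α * (Nat.factorial n : ℝ) ≤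
        ((Finset.univ.filter fun σ : Equiv.Perm (Fin n) =>
          Tcrit α T x ≤ T (permute σ x)).card : ℝ) :=
  ⟨card_permute_eq_Tcrit α T x hinj, mul_factorial_le_card_Tcrit_le α T x hα.2⟩
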